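/- For every integer k ≥ 2, the series Σ_{n=1}^∞ (log k − (H_{kn} − H_n))/n converges and its sum equals −∫₀¹ (Q_k′(t)/Q_k(t))·log(1−t^k) dt, where Q_k(t) = 1 + t + ⋯ + t^{k−1}. -/

import Mathlib

open Filter Topology intervalIntegral

/-- The `n`-th harmonic number `Hₙ = Σ_{j=1}^n 1/j`. -/
noncomputable def H (n : ℕ) : ℝ := ∑ j ∈ Finset.range n, 1 / ((j : ℝ) + 1)

/-- The polynomial `Q_k(t) = 1 + t + ⋯ + t^{k−1}`. -/
noncomputable def Q (k : ℕ) : ℝ → ℝ := fun t => ∑ i ∈ Finset.range k, t ^ i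

/-!
Write `g = Q_k' / Q_k`. Differentiating `(t - 1) Q_k(t) = t^k - 1` gives
`(1 - t) Q_k' = Q_k - k t^(k-1)`, so `t^(kn) (1 - t^k) g(t) = t^(kn) (Q_k(t) - k t^(k-1))` is a
polynomial with integral `(H_{kn+k} - H_{kn}) - 1/(n+1)` over `[0, 1]`. Starting from
`∫₀¹ g = log k`, induction on `n` gives `∫₀¹ t^(kn) g = log k - (H_{kn} - H_n)`, so the `m`-th
partial sum equals `∫₀¹ (Σ_{n<m} t^(k(n+1))/(n+1)) g`. These integrands converge pointwise to
`-log(1 - t^k) g`, and `|log(1 - t^k)| ≤ |log(1 - t)|` supplies an integrable majorant for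
dominated convergence.
-/

open MeasureTheory (volume ae_restrict_mem)

theorem Q_pos {k : ℕ} (hk : 1 ≤ k) {t : ℝ} (ht : 0 ≤ t) : 0 < Q k t :=
  lt_of_lt_of_le one_pos <| by
    simpa [Q] using Finset.single_le_sum (f := fun i => t ^ i) (fun i _ => pow_nonneg ht i)
      (Finset.mem_range.2 hk)

theorem Q_zero {k : ℕ} (hk : 1 ≤ k) : Q k 0 = 1 := by
  obtain ⟨j, rfl⟩ := Nat.exists_eq_add_of_le' hk
  simp [Q, Finset.sum_range_succ']

theorem Q_one (k : ℕ) : Q k 1 = k := by simp [Q]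

theorem sub_one_mul_Q (k : ℕ) (t : ℝ) : (t - 1) * Q k t = t ^ k - 1 := by
  rw [mul_comm]; exact geom_sum_mul t k

theorem contDiff_Q (k : ℕ) : ContDiff ℝ 1 (Q k) := by
  unfold Q; fun_prop

theorem continuous_deriv_Q (k : ℕ) : Continuous (deriv (Q k)) :=
  (contDiff_Q k).continuous_deriv le_rfl

theorem Q_add_sub_one_mul_deriv_Q (k : ℕ) (t : ℝ) :
    Q k t + (t - 1) * deriv (Q k) t = k * t ^ (k - 1) := by
  have hQ : HasDerivAt (Q k) (deriv (Q k) t) t :=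
    ((contDiff_Q k).differentiable one_ne_zero t).hasDerivAt
  have h := ((hasDerivAt_id' t).sub_const 1).fun_mul hQ
  rw [show (fun x => (x - 1) * Q k x) = fun x => x ^ k - 1 from
    funext (sub_one_mul_Q k)] at h
  simpa using h.unique ((hasDerivAt_pow k t).sub_const 1)

theorem continuousOn_deriv_Q_div_Q {k : ℕ} (hk : 1 ≤ k) :
    ContinuousOn (fun t => deriv (Q k) t / Q k t) (Set.Icc 0 1) :=
  (continuous_deriv_Q k).continuousOn.div (contDiff_Q k).continuous.continuousOn
    fun _ ht => (Q_pos hk ht.1).ne'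

theorem integral_deriv_Q_div_Q {k : ℕ} (hk : 1 ≤ k) :
    ∫ t in (0:ℝ)..1, deriv (Q k) t / Q k t = Real.log k := by
  rw [integral_eq_sub_of_hasDerivAt (f := fun t => Real.log (Q k t)), Q_one, Q_zero hk,
    Real.log_one, sub_zero]
  · intro t ht
    rw [Set.uIcc_of_le zero_le_one] at ht
    exact (((contDiff_Q k).differentiable one_ne_zero t).hasDerivAt).log (Q_pos hk ht.1).ne'
  · exact (continuousOn_deriv_Q_div_Q hk).intervalIntegrable_of_Icc zero_le_one

theorem H_add_sub_H (a b : ℕ) : H (a + b) - H a = ∑ i ∈ Finset.range b, 1 / ((a : ℝ) + i + 1) := by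
  simp [H, Finset.sum_range_add, add_assoc]

theorem H_succ_sub_H (n : ℕ) : H (n + 1) - H n = 1 / ((n : ℝ) + 1) := by
  simp [H, Finset.sum_range_succ]

theorem integral_pow_mul_Q (a k : ℕ) :
    ∫ t in (0:ℝ)..1, t ^ a * Q k t = H (a + k) - H a := by
  simp only [Q, Finset.mul_sum, ← pow_add]
  rw [integral_finsetSum fun i _ => intervalIntegrable_pow _, H_add_sub_H]
  refine Finset.sum_congr rfl fun i _ => ?_
  simp [integral_pow, add_assoc]

theorem pow_sub_pow_add_mul_deriv_Q_div_Q {k : ℕ} (hk : 1 ≤ k) (a : ℕ) {t : ℝ} (ht : 0 ≤ t) :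
    (t ^ a - t ^ (a + k)) * (deriv (Q k) t / Q k t)
      = t ^ a * Q k t - k * t ^ (a + (k - 1)) := by
  have hQ := (Q_pos hk ht).ne'
  have h₁ := sub_one_mul_Q k t
  have h₂ := Q_add_sub_one_mul_deriv_Q k t
  rw [mul_div_assoc', div_eq_iff hQ, pow_add, pow_add]
  linear_combination t ^ a * deriv (Q k) t * h₁ - t ^ a * Q k t * h₂

theorem integral_pow_mul_deriv_Q_div_Q_sub_succ {k : ℕ} (hk : 1 ≤ k) (n : ℕ) :
    (∫ t in (0:ℝ)..1, t ^ (k * n) * (deriv (Q k) t / Q k t))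
      - ∫ t in (0:ℝ)..1, t ^ (k * (n + 1)) * (deriv (Q k) t / Q k t)
      = (H (k * n + k) - H (k * n)) - (H (n + 1) - H n) := by
  have hint (a : ℕ) : IntervalIntegrable (fun t => t ^ a * (deriv (Q k) t / Q k t)) volume 0 1 :=
    ((continuous_pow a).continuousOn.mul (continuousOn_deriv_Q_div_Q hk)).intervalIntegrable_of_Icc
      zero_le_one
  rw [← integral_sub (hint _) (hint _), mul_add_one]
  simp only [← sub_mul]
  rw [integral_congr fun t ht => pow_sub_pow_add_mul_deriv_Q_div_Q hk (k * n)
      (Set.uIcc_of_le (zero_le_one' ℝ) ▸ ht).1,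
    integral_sub (((continuous_pow _).fun_mul (contDiff_Q k).continuous).intervalIntegrable _ _)
      (intervalIntegrable_pow _ |>.const_mul _),
    integral_const_mul, integral_pow, integral_pow_mul_Q, H_succ_sub_H]
  have hk₀ : (k : ℝ) ≠ 0 := by positivity
  push_cast [Nat.cast_sub hk]
  rw [show (k : ℝ) * n + (k - 1) + 1 = k * (n + 1) by ring]
  simp [field]

theorem integral_pow_mul_deriv_Q_div_Q {k : ℕ} (hk : 1 ≤ k) (n : ℕ) :
    ∫ t in (0:ℝ)..1, t ^ (k * n) * (deriv (Q k) t / Q k t) = Real.log k - (H (k * n) - H n) := by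
  induction n with
  | zero => simp [integral_deriv_Q_div_Q hk, H]
  | succ n ih =>
    have h := integral_pow_mul_deriv_Q_div_Q_sub_succ hk n
    rw [ih, ← mul_add_one] at h
    linarith

theorem sum_range_pow_succ_div_le_neg_log {x : ℝ} (hx₀ : 0 ≤ x) (hx₁ : x < 1) (m : ℕ) :
    ∑ n ∈ Finset.range m, x ^ (n + 1) / (n + 1) ≤ -Real.log (1 - x) :=
  sum_le_hasSum _ (fun n _ => by positivity)
    (Real.hasSum_pow_div_log_of_abs_lt_one (by rwa [abs_of_nonneg hx₀]))

theorem abs_log_one_sub_pow_le {k : ℕ} (hk : 1 ≤ k) {t : ℝ} (ht₀ : 0 ≤ t) (ht₁ : t ≤ 1) :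
    |Real.log (1 - t ^ k)| ≤ |Real.log (1 - t)| := by
  rcases ht₁.eq_or_lt with rfl | ht₁
  · simp
  have hpow : t ^ k ≤ t := pow_le_of_le_one ht₀ ht₁.le (by omega)
  have hpos : 0 < 1 - t := by linarith
  rw [abs_of_nonpos (Real.log_nonpos (by linarith) (by linarith [pow_nonneg ht₀ k])),
    abs_of_nonpos (Real.log_nonpos hpos.le (by linarith))]
  exact neg_le_neg (Real.log_le_log hpos (by linarith))

theorem intervalIntegrable_log_one_sub_pow {k : ℕ} (hk : 1 ≤ k) :
    IntervalIntegrable (fun t => Real.log (1 - t ^ k)) volume 0 1 := by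
  have hlog : IntervalIntegrable (fun t => Real.log (1 - t)) volume 0 1 := by
    simpa using (intervalIntegrable_log' (a := 0) (b := 1)).comp_sub_left 1 |>.symm
  refine hlog.mono_fun (by fun_prop : Measurable _).aestronglyMeasurable ?_
  rw [Set.uIoc_of_le zero_le_one]
  filter_upwards [ae_restrict_mem measurableSet_Ioc] with t ht
  simpa using abs_log_one_sub_pow_le hk ht.1.le ht.2

theorem tendsto_integral_sum_pow_succ_div_mul {k : ℕ} (hk : 1 ≤ k) {g : ℝ → ℝ}
    (hg : ContinuousOn g (Set.Icc 0 1)) :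
    Tendsto (fun m => ∫ t in (0:ℝ)..1, (∑ n ∈ Finset.range m, (t ^ k) ^ (n + 1) / (n + 1)) * g t)
      atTop (𝓝 (∫ t in (0:ℝ)..1, -Real.log (1 - t ^ k) * g t)) := by
  have hpow : ∀ᵐ t ∂volume, t ∈ Set.uIoc (0:ℝ) 1 → 0 ≤ t ^ k ∧ t ^ k < 1 := by
    filter_upwards [volume.ae_ne 1] with t ht₁ ht
    rw [Set.uIoc_of_le zero_le_one] at ht
    exact ⟨pow_nonneg ht.1.le k, pow_lt_one₀ ht.1.le (ht.2.lt_of_ne ht₁) (by omega)⟩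
  apply tendsto_integral_filter_of_dominated_convergence (fun t => |Real.log (1 - t ^ k) * g t|)
  · refine .of_forall fun m => ContinuousOn.aestronglyMeasurable ?_ measurableSet_uIoc
    rw [Set.uIoc_of_le zero_le_one]
    exact (by fun_prop : Continuous _).continuousOn.mul (hg.mono Set.Ioc_subset_Icc_self)
  · refine .of_forall fun m => ?_
    filter_upwards [hpow] with t ht ht'
    obtain ⟨hx₀, hx₁⟩ := ht ht'
    rw [Real.norm_eq_abs, abs_mul, abs_mul,
      abs_of_nonneg (Finset.sum_nonneg fun n _ => by positivity),
      abs_of_nonpos (Real.log_nonpos (by linarith) (by linarith))]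
    gcongr
    exact sum_range_pow_succ_div_le_neg_log hx₀ hx₁ m
  · exact ((intervalIntegrable_log_one_sub_pow hk).mul_continuousOn
      (by rwa [Set.uIcc_of_le zero_le_one])).abs
  · filter_upwards [hpow] with t ht ht'
    obtain ⟨hx₀, hx₁⟩ := ht ht'
    exact (Real.hasSum_pow_div_log_of_abs_lt_one (by rwa [abs_of_nonneg hx₀])).tendsto_sum_nat
      |>.mul_const (g t)

theorem sum_range_div_succ_eq_integral {k : ℕ} (hk : 1 ≤ k) (m : ℕ) :
    ∑ n ∈ Finset.range m, (Real.log k - (H (k * (n + 1)) - H (n + 1))) / (n + 1)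
      = ∫ t in (0:ℝ)..1,
          (∑ n ∈ Finset.range m, (t ^ k) ^ (n + 1) / (n + 1)) * (deriv (Q k) t / Q k t) := by
  simp only [Finset.sum_mul, div_mul_eq_mul_div, ← pow_mul]
  rw [integral_finsetSum fun n _ => ?_]
  · refine Finset.sum_congr rfl fun n _ => ?_
    rw [integral_div, integral_pow_mul_deriv_Q_div_Q hk]
  · exact (((continuous_pow _).continuousOn.mul (continuousOn_deriv_Q_div_Q hk)).div_const
      _).intervalIntegrable_of_Icc zero_le_one

/-- For `k ≥ 2`, the series `Σ_{n=1}^∞ (log k − (H_{kn} − H_n))/n` converges, with sum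
`−∫₀¹ (Q_k′(t)/Q_k(t))·log(1−t^k) dt`. -/
theorem stmt_12 (k : ℕ) (hk : 2 ≤ k) :
    Tendsto (fun m => ∑ n ∈ Finset.range m,
        (Real.log k - (H (k * (n + 1)) - H (n + 1))) / (n + 1))
      atTop
      (𝓝 (-∫ t in (0:ℝ)..1, (deriv (Q k) t / Q k t) * Real.log (1 - t ^ k))) := by
  have hk₁ : 1 ≤ k := by omega
  rw [funext (sum_range_div_succ_eq_integral hk₁), ← integral_neg]
  simpa only [neg_mul, mul_comm (Real.log _)] using
    tendsto_integral_sum_pow_succ_div_mul hk₁ (continuousOn_deriv_Q_div_Q hk₁)
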